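/- Let a_0,…,a_n be distinct real numbers and let l_i(x) = ∏_{j≠i} (x−a_j)/(a_i−a_j) be the i-th Lagrange fundamental polynomial. Then for every k ≥ 0 and every x distinct from all a_j with j ≠ i, (1/k!) l_i^{(k)}(x) = l_i(x) · Z_k(−S_{1,i}(x), …, −S_{k,i}(x)), where S_{r,i}(x) = Σ_{j≠i} 1/(a_j − x)^r. -/

import Mathlib

/-!
Write `l_i(t) = c ∏_{j ≠ i} (t - a_j)`. Its `k`-th Taylor coefficient at `x` is
`c ∏_{j ≠ i} (x - a_j) · e_k(w)`, where `e_k` is the elementary symmetric function of the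
numbers `w_j = (x - a_j)⁻¹`, since the Taylor shift turns each factor into `X + (x - a_j)`.
It remains to see that `Z_k(-S_1, …, -S_k) = e_k(w)`. As `-S_r = -(-1)^r p_r(w)` with `p_r` the
power sums and `-(-1)^r` is the sign of an `r`-cycle, the term of `σ` in `k! Z_k` is
`sign σ · ∏_{cycles c} p_{|c|}(w)`, and `∏_c p_{|c|}(w) = ∑_f ∏_v [f (σ v) = f v] w_{f v}`,
the sum running over all colourings `f : Fin k → {j ≠ i}`. Summing over `σ` first gives
`∑_f det M_f` with `M_f u v = [f u = f v] w_{f v}`: this determinant is `∏_v w_{f v}` when `f` is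
injective and vanishes otherwise (two equal rows), so the total is `k! e_k(w)`.
-/

open Finset

/-- `cycleCount i σ` is the number of cycles of length `i` in the cycle
decomposition of the permutation `σ` (fixed points count as 1-cycles). -/
def cycleCount {n : ℕ} (i : ℕ) (σ : Equiv.Perm (Fin n)) : ℕ :=
  if i = 1 then (Finset.univ.filter fun a => σ a = a).card
  else Multiset.count i σ.cycleType

/-- The cycle index of the symmetric group `S_n`:
`Z_n(x_1,…,x_n) = (1/n!) ∑_{σ ∈ S_n} ∏_{i=1}^n x_i ^ c_i(σ)`. -/
noncomputable def cycleIndex (n : ℕ) (x : ℕ → ℝ) : ℝ :=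
  (n.factorial : ℝ)⁻¹ *
    ∑ σ : Equiv.Perm (Fin n), ∏ i ∈ Finset.Icc 1 n, x i ^ cycleCount i σ

namespace Polynomial

theorem iteratedDeriv_eval {𝕜 : Type*} [NontriviallyNormedField 𝕜] (p : 𝕜[X]) (k : ℕ) :
    iteratedDeriv k (fun t => p.eval t) = fun t => (derivative^[k] p).eval t := by
  induction k with
  | zero => simp
  | succ k ih =>
    ext t
    rw [iteratedDeriv_succ, ih, Function.iterate_succ_apply', Polynomial.deriv]

theorem iteratedDeriv_eval_eq_factorial_mul_taylor_coeff {𝕜 : Type*}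
    [NontriviallyNormedField 𝕜] (p : 𝕜[X]) (k : ℕ) (x : 𝕜) :
    iteratedDeriv k (fun t => p.eval t) x = k.factorial * (taylor x p).coeff k := by
  rw [iteratedDeriv_eval, ← factorial_smul_hasseDeriv, taylor_coeff]
  simp [nsmul_eq_mul]

theorem taylor_prod_X_sub_C_coeff {R ι : Type*} [CommRing R] [DecidableEq ι]
    (s : Finset ι) (b : ι → R) (x : R) (k : ℕ) :
    (taylor x (∏ j ∈ s, (X - C (b j)))).coeff k =
      ∑ u ∈ powersetCard k s, ∏ j ∈ s \ u, (x - b j) := by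
  have hshift : taylor x (∏ j ∈ s, (X - C (b j))) = ∏ j ∈ s, (X + C (x - b j)) := by
    rw [taylor_apply, prod_comp]
    exact prod_congr rfl fun j _ => by simp only [sub_comp, X_comp, C_comp, C_sub]; ring
  rw [hshift, prod_add, finsetSum_coeff, powersetCard_eq_filter, sum_filter]
  refine sum_congr rfl fun u _ => ?_
  rw [prod_const, ← map_prod, mul_comm, coeff_C_mul_X_pow]
  exact if_congr eq_comm rfl rfl

end Polynomial

open Polynomial in
theorem iteratedDeriv_prod_sub {𝕜 ι : Type*} [NontriviallyNormedField 𝕜] [DecidableEq ι]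
    (s : Finset ι) (b : ι → 𝕜) (k : ℕ) (x : 𝕜) :
    iteratedDeriv k (fun t => ∏ j ∈ s, (t - b j)) x =
      k.factorial * ∑ u ∈ powersetCard k s, ∏ j ∈ s \ u, (x - b j) := by
  have h : (fun t => ∏ j ∈ s, (t - b j)) = fun t => (∏ j ∈ s, (X - C (b j))).eval t := by
    simp [eval_prod]
  rw [h, iteratedDeriv_eval_eq_factorial_mul_taylor_coeff, taylor_prod_X_sub_C_coeff]

theorem Finset.prod_sdiff_eq_prod_mul_prod_inv {ι K : Type*} [DecidableEq ι] [Field K]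
    {s u : Finset ι} {w : ι → K} (hu : u ⊆ s) (hw : ∀ j ∈ s, w j ≠ 0) :
    ∏ j ∈ s \ u, w j = (∏ j ∈ s, w j) * ∏ j ∈ u, (w j)⁻¹ := by
  rw [prod_inv_distrib, eq_mul_inv_iff_mul_eq₀ (prod_ne_zero_iff.2 fun j hj => hw j (hu hj)),
    prod_sdiff hu]

namespace Equiv.Perm

variable {α : Type*} [Fintype α]

theorem SameCycle.apply_eq_of_invariant {β : Type*} {σ : Perm α} {f : α → β}
    (hf : ∀ v, f (σ v) = f v) {u v : α} (h : σ.SameCycle u v) : f u = f v := by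
  obtain ⟨m, rfl⟩ := h.exists_nat_pow_eq
  clear h
  induction m with
  | zero => rfl
  | succ m ih => rw [pow_succ', mul_apply, hf, ih]

variable [DecidableEq α]

instance (σ : Perm α) : DecidableRel (SameCycle.setoid σ).r :=
  inferInstanceAs (DecidableRel σ.SameCycle)

/-- The cycles of `σ`, fixed points included. -/
abbrev Cycles (σ : Perm α) : Type _ := Quotient (SameCycle.setoid σ)

def Cycles.length {σ : Perm α} (q : σ.Cycles) : ℕ := #{v | Quotient.mk _ v = q}

theorem Cycles.length_mk (σ : Perm α) (v : α) :
    Cycles.length (Quotient.mk _ v : σ.Cycles) = if σ v = v then 1 else #(σ.cycleOf v).support := by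
  rw [Cycles.length]
  split_ifs with hv
  · rw [card_eq_one]
    refine ⟨v, ?_⟩
    ext u
    simp only [mem_filter, mem_univ, true_and, mem_singleton, Quotient.eq]
    exact ⟨fun h => h.eq_of_right hv, fun h => h ▸ SameCycle.refl σ v⟩
  · congr 1
    ext u
    simp only [mem_filter, mem_univ, true_and, Quotient.eq, mem_support_cycleOf_iff' hv]
    exact sameCycle_comm

theorem Cycles.length_eq (σ : Perm α) (q : σ.Cycles) :
    q.length = if σ q.out = q.out then 1 else #(σ.cycleOf q.out).support := by
  conv_lhs => rw [← Quotient.out_eq q]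
  exact length_mk σ q.out

theorem map_length_filter_fixed (σ : Perm α) :
    (univ.filter fun q : σ.Cycles => σ q.out = q.out).val.map Cycles.length =
      Multiset.replicate (Fintype.card α - #σ.support) 1 := by
  rw [Multiset.eq_replicate]
  refine ⟨?_, fun m hm => ?_⟩
  · rw [Multiset.card_map, card_val, ← card_compl]
    refine card_bij' (fun q _ => q.out) (fun v _ => Quotient.mk _ v) ?_ ?_ ?_ ?_
    · intro q hq
      simpa using hq
    · intro v hv
      simp only [mem_compl, mem_support, not_not] at hv
      simp only [mem_filter, mem_univ, true_and]
      rw [(Quotient.mk_out (s := SameCycle.setoid σ) v).eq_of_right hv]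
      exact hv
    · exact fun q _ => Quotient.out_eq q
    · intro v hv
      simp only [mem_compl, mem_support, not_not] at hv
      exact (Quotient.mk_out (s := SameCycle.setoid σ) v).eq_of_right hv
  · obtain ⟨q, hq, rfl⟩ := Multiset.mem_map.1 hm
    rw [Cycles.length_eq, if_pos (mem_filter.1 hq).2]

theorem image_cycleOf_filter_not_fixed (σ : Perm α) :
    (univ.filter fun q : σ.Cycles => ¬σ q.out = q.out).image (fun q => σ.cycleOf q.out) =
      σ.cycleFactorsFinset := by
  ext c
  simp only [mem_image, mem_filter, mem_univ, true_and]
  constructor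
  · rintro ⟨q, hq, rfl⟩
    exact cycleOf_mem_cycleFactorsFinset_iff.2 (mem_support.2 hq)
  · intro hc
    obtain ⟨a, ha⟩ := (mem_cycleFactorsFinset_iff.1 hc).1.nonempty_support
    have hout := Quotient.mk_out (s := SameCycle.setoid σ) a
    refine ⟨Quotient.mk _ a, ?_, ?_⟩
    · rw [hout.apply_eq_self_iff]
      exact mem_support.1 (mem_cycleFactorsFinset_support_le hc ha)
    · rw [hout.cycleOf_eq, cycle_is_cycleOf ha hc]

theorem map_length_filter_not_fixed (σ : Perm α) :
    (univ.filter fun q : σ.Cycles => ¬σ q.out = q.out).val.map Cycles.length = σ.cycleType := by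
  have hinj : Set.InjOn (fun q : σ.Cycles => σ.cycleOf q.out)
      (univ.filter fun q : σ.Cycles => ¬σ q.out = q.out) := by
    intro q hq q' hq' h
    simp only [coe_filter, mem_univ, true_and, Set.mem_ofPred_eq] at hq hq'
    rw [← Quotient.out_eq q, ← Quotient.out_eq q', Quotient.eq]
    exact (sameCycle_iff_cycleOf_eq_of_mem_support (mem_support.2 hq) (mem_support.2 hq')).2 h
  rw [cycleType_def, ← image_cycleOf_filter_not_fixed, image_val_of_injOn hinj, Multiset.map_map]
  refine Multiset.map_congr rfl fun q hq => ?_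
  rw [Cycles.length_eq, if_neg (mem_filter.1 hq).2]
  rfl

theorem map_length_cycles_eq_parts (σ : Perm α) :
    (univ : Finset σ.Cycles).val.map Cycles.length = σ.partition.parts := by
  rw [parts_partition, ← map_length_filter_fixed, ← map_length_filter_not_fixed, add_comm,
    ← Multiset.map_add, filter_val, filter_val, Multiset.filter_add_not]

theorem sum_prod_ite_apply_eq {ι R : Type*} [Fintype ι] [DecidableEq ι] [CommSemiring R]
    (σ : Perm α) (t : ι → R) :
    ∑ f : α → ι, ∏ v, (if f (σ v) = f v then t (f v) else 0) =
      (σ.partition.parts.map fun r => ∑ j, t j ^ r).prod := by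
  let mk : α → σ.Cycles := Quotient.mk _
  calc ∑ f : α → ι, ∏ v, (if f (σ v) = f v then t (f v) else 0)
      = ∑ f : α → ι with ∀ v, f (σ v) = f v, ∏ v, t (f v) := by
        simp only [prod_ite_zero, mem_univ, true_implies, sum_filter]
    _ = ∑ g : σ.Cycles → ι, ∏ v, t (g (mk v)) := by
        refine (sum_nbij (fun g => g ∘ mk) ?_ ?_ ?_ fun _ _ => rfl).symm
        · intro g _
          simp only [mem_filter, mem_univ, true_and, Function.comp_apply]
          exact fun v => congrArg g (Quotient.sound (SameCycle.symm ⟨1, by simp⟩))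
        · exact fun g _ g' _ h => Quotient.mk_surjective.injective_comp_right h
        · intro f hf
          simp only [coe_filter, mem_univ, true_and, Set.mem_ofPred_eq] at hf
          exact ⟨Quotient.lift f fun u v h => SameCycle.apply_eq_of_invariant hf h, by simp, rfl⟩
    _ = ∑ g : σ.Cycles → ι, ∏ q, t (g q) ^ q.length := by
        refine sum_congr rfl fun g _ => ?_
        rw [Finset.prod_comp (fun q => t (g q)) mk, image_univ_of_surjective Quotient.mk_surjective]
        rfl
    _ = (σ.partition.parts.map fun r => ∑ j, t j ^ r).prod := by
        rw [← Fintype.prod_sum fun (q : σ.Cycles) (j : ι) => t j ^ q.length,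
          ← map_length_cycles_eq_parts, Multiset.map_map]
        rfl

theorem sign_eq_prod_map_parts (σ : Perm α) :
    sign σ = (σ.partition.parts.map fun n => -(-1 : ℤˣ) ^ n).prod := by
  rw [sign_of_cycleType', parts_partition, Multiset.map_add, Multiset.prod_add,
    Multiset.map_replicate, Multiset.prod_replicate]
  simp

theorem intCast_sign_eq_prod_map_parts {R : Type*} [CommRing R] (σ : Perm α) :
    ((sign σ : ℤ) : R) = (σ.partition.parts.map fun n => -(-1 : R) ^ n).prod := by
  rw [sign_eq_prod_map_parts, ← Units.coeHom_apply, map_multiset_prod, Int.cast_multiset_prod,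
    Multiset.map_map, Multiset.map_map]
  exact congrArg _ (Multiset.map_congr rfl fun n _ => by simp)

end Equiv.Perm

theorem Matrix.det_of_ite_apply_eq {κ ι R : Type*} [Fintype κ] [DecidableEq κ] [DecidableEq ι]
    [CommRing R] (f : κ → ι) (t : ι → R) :
    (Matrix.of fun u v => if f u = f v then t (f v) else 0).det =
      if Function.Injective f then ∏ v, t (f v) else 0 := by
  split_ifs with hf
  · have hdiag : (Matrix.of fun u v => if f u = f v then t (f v) else 0) =
        Matrix.diagonal fun v => t (f v) := by
      ext u v
      by_cases h : u = v <;> simp [hf.eq_iff, h]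
    rw [hdiag, Matrix.det_diagonal]
  · obtain ⟨u, w, hfuw, huw⟩ := Function.not_injective_iff.1 hf
    exact Matrix.det_zero_of_row_eq huw (funext fun v => by simp [hfuw])

theorem card_filter_injective_image_eq {ι : Type*} [Fintype ι] [DecidableEq ι] {k : ℕ}
    {s : Finset ι} (hs : #s = k) :
    #{f : Fin k → ι | Function.Injective f ∧ univ.image f = s} = k.factorial := by
  have e : Fin k ≃ s := (Fintype.equivFinOfCardEq (by simp [hs])).symm
  have hcard : Fintype.card (Fin k ≃ s) = k.factorial := by
    rw [Fintype.card_equiv e, Fintype.card_fin]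
  rw [← hcard, ← card_univ]
  symm
  refine card_bij (fun g _ => fun v => (g v : ι)) ?_ ?_ ?_
  · intro g _
    simp only [mem_filter, mem_univ, true_and]
    refine ⟨fun u v h => g.injective (Subtype.ext h), ?_⟩
    ext j
    simp only [mem_image, mem_univ, true_and]
    exact ⟨fun ⟨v, hv⟩ => hv ▸ (g v).2, fun hj => ⟨g.symm ⟨j, hj⟩, by simp⟩⟩
  · intro g _ g' _ h
    exact Equiv.ext fun v => Subtype.ext (congrFun h v)
  · intro f hf
    simp only [mem_filter, mem_univ, true_and] at hf
    obtain ⟨hinj, himage⟩ := hf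
    have hmem (v : Fin k) : f v ∈ s := himage ▸ mem_image_of_mem f (mem_univ v)
    have hbij : Function.Bijective fun v => (⟨f v, hmem v⟩ : s) :=
      (Fintype.bijective_iff_injective_and_card _).2
        ⟨fun u v h => hinj (congrArg Subtype.val h), by simp [hs]⟩
    exact ⟨Equiv.ofBijective _ hbij, mem_univ _, rfl⟩

theorem sum_injective_prod_eq_factorial_mul {ι R : Type*} [Fintype ι] [DecidableEq ι]
    [CommSemiring R] (k : ℕ) (t : ι → R) :
    ∑ f : Fin k → ι with Function.Injective f, ∏ v, t (f v) =
      k.factorial * ∑ s ∈ powersetCard k univ, ∏ j ∈ s, t j := by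
  rw [← sum_fiberwise_of_maps_to (g := fun f => univ.image f) (t := powersetCard k univ)
    fun f hf => mem_powersetCard.2 ⟨subset_univ _, by
      rw [card_image_of_injective _ (mem_filter.1 hf).2, card_univ, Fintype.card_fin]⟩, mul_sum]
  refine sum_congr rfl fun s hs => ?_
  have hterm : ∀ f ∈ ({f : Fin k → ι | Function.Injective f} : Finset _).filter
      (fun f => univ.image f = s), ∏ v, t (f v) = ∏ j ∈ s, t j := by
    intro f hf
    simp only [mem_filter, mem_univ, true_and] at hf
    rw [← hf.2, prod_image fun u _ v _ h => hf.1 h]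
  rw [sum_congr rfl hterm, sum_const, filter_filter,
    card_filter_injective_image_eq (mem_powersetCard.1 hs).2, nsmul_eq_mul]

open Equiv Perm

theorem cycleCount_eq_count_parts {k r : ℕ} (σ : Perm (Fin k)) (hr : 1 ≤ r) :
    cycleCount r σ = σ.partition.parts.count r := by
  rw [cycleCount, parts_partition, Multiset.count_add, Multiset.count_replicate]
  obtain rfl | hr := hr.eq_or_lt
  · have h1 : σ.cycleType.count 1 = 0 :=
      Multiset.count_eq_zero.2 fun h => (one_lt_of_mem_cycleType h).ne rfl
    rw [if_pos rfl, if_pos rfl, h1, zero_add, ← card_compl]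
    congr 1
    ext a
    simp [mem_support]
  · rw [if_neg hr.ne', if_neg hr.ne, add_zero]

theorem prod_pow_cycleCount {M : Type*} [CommMonoid M] {k : ℕ} (σ : Perm (Fin k)) (x : ℕ → M) :
    ∏ r ∈ Icc 1 k, x r ^ cycleCount r σ = (σ.partition.parts.map x).prod := by
  have hsub : σ.partition.parts.toFinset ⊆ Icc 1 k := fun r hr => by
    rw [Multiset.mem_toFinset] at hr
    exact mem_Icc.2 ⟨σ.partition.parts_pos hr, by simpa using σ.partition.le_of_mem_parts hr⟩
  rw [prod_multiset_map_count, prod_subset hsub fun r _ hr => by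
    rw [Multiset.mem_toFinset, ← Multiset.count_eq_zero] at hr
    rw [hr, pow_zero]]
  exact prod_congr rfl fun r hr => by rw [cycleCount_eq_count_parts σ (mem_Icc.1 hr).1]

theorem cycleIndex_neg_sum_neg_pow_of_fintype {ι : Type*} [Fintype ι] [DecidableEq ι] (k : ℕ)
    (t : ι → ℝ) :
    cycleIndex k (fun r => -∑ j, (-t j) ^ r) = ∑ s ∈ powersetCard k univ, ∏ j ∈ s, t j := by
  let M (f : Fin k → ι) : Matrix (Fin k) (Fin k) ℝ :=
    Matrix.of fun u v => if f u = f v then t (f v) else 0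
  -- `-∑ j, (-t j) ^ r = -(-1) ^ r * ∑ j, t j ^ r`, and `-(-1) ^ r` is the sign of an `r`-cycle.
  have hterm (σ : Perm (Fin k)) :
      ∏ r ∈ Icc 1 k, (-∑ j, (-t j) ^ r) ^ cycleCount r σ =
        ∑ f : Fin k → ι, (sign σ : ℝ) * ∏ v, M f (σ v) v := by
    simp only [M, Matrix.of_apply]
    rw [← mul_sum, prod_pow_cycleCount, intCast_sign_eq_prod_map_parts, sum_prod_ite_apply_eq,
      ← Multiset.prod_map_mul]
    congr 1
    refine Multiset.map_congr rfl fun r _ => ?_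
    simp only [neg_pow (t _), ← mul_sum, neg_mul]
  rw [cycleIndex, sum_congr rfl fun σ _ => hterm σ, sum_comm]
  simp only [← Matrix.det_apply', M, Matrix.det_of_ite_apply_eq, ← sum_filter,
    sum_injective_prod_eq_factorial_mul]
  rw [← mul_assoc, inv_mul_cancel₀ (by positivity), one_mul]

theorem cycleIndex_neg_sum_neg_pow {ι : Type*} [DecidableEq ι] (k : ℕ) (s : Finset ι)
    (w : ι → ℝ) :
    cycleIndex k (fun r => -∑ j ∈ s, (-w j) ^ r) = ∑ u ∈ powersetCard k s, ∏ j ∈ u, w j := by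
  have h := cycleIndex_neg_sum_neg_pow_of_fintype k fun j : s => w j
  rw [funext fun r => congrArg Neg.neg (sum_coe_sort s fun j => (-w j) ^ r)] at h
  conv_rhs => rw [← attach_map_val (s := s), powersetCard_map, sum_map]
  rw [h, univ_eq_attach]
  exact sum_congr rfl fun u _ => by simp [prod_map]

theorem iteratedDeriv_lagrange_cycleIndex_general (n : ℕ) (a : Fin (n + 1) → ℝ)
    (i : Fin (n + 1)) (k : ℕ) (x : ℝ)
    (hx : ∀ j ∈ Finset.univ.erase i, x ≠ a j) :
    (k.factorial : ℝ)⁻¹ *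
        iteratedDeriv k
          (fun t => ∏ j ∈ Finset.univ.erase i, (t - a j) / (a i - a j)) x =
      (∏ j ∈ Finset.univ.erase i, (x - a j) / (a i - a j)) *
        cycleIndex k
          (fun r => -∑ j ∈ Finset.univ.erase i, ((a j - x) ^ r)⁻¹) := by
  set J := univ.erase i
  have hpow (j : Fin (n + 1)) (r : ℕ) : ((a j - x) ^ r)⁻¹ = (-(x - a j)⁻¹) ^ r := by
    rw [← inv_pow, ← inv_neg, neg_sub]
  have hsdiff : ∀ u ∈ powersetCard k J, ∏ j ∈ J \ u, (x - a j) =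
      (∏ j ∈ J, (x - a j)) * ∏ j ∈ u, (x - a j)⁻¹ := fun u hu =>
    prod_sdiff_eq_prod_mul_prod_inv (mem_powersetCard.1 hu).1 fun j hj => sub_ne_zero.2 (hx j hj)
  simp only [prod_div_distrib, iteratedDeriv_div_const, iteratedDeriv_prod_sub, hpow,
    cycleIndex_neg_sum_neg_pow, sum_congr rfl hsdiff, ← mul_sum]
  field_simp

/-- For distinct nodes `a_0,…,a_n`, the Lagrange fundamental polynomial
`l_i(x) = ∏_{j≠i} (x-a_j)/(a_i-a_j)` satisfies, for `k ≥ 0` and `x ≠ a_j` (`j ≠ i`),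
`(1/k!) l_i^{(k)}(x) = l_i(x) · Z_k(-S_{1,i}(x),…,-S_{k,i}(x))` with
`S_{r,i}(x) = ∑_{j≠i} (a_j - x)^{-r}`. -/
theorem iteratedDeriv_lagrange_cycleIndex (n : ℕ) (a : Fin (n + 1) → ℝ)
    (ha : Function.Injective a) (i : Fin (n + 1)) (k : ℕ) (x : ℝ)
    (hx : ∀ j ∈ Finset.univ.erase i, x ≠ a j) :
    (k.factorial : ℝ)⁻¹ *
        iteratedDeriv k
          (fun t => ∏ j ∈ Finset.univ.erase i, (t - a j) / (a i - a j)) x =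
      (∏ j ∈ Finset.univ.erase i, (x - a j) / (a i - a j)) *
        cycleIndex k
          (fun r => -∑ j ∈ Finset.univ.erase i, ((a j - x) ^ r)⁻¹) :=
  iteratedDeriv_lagrange_cycleIndex_general n a i k x hx
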